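/- arXiv:2309.15645 — 5 statements merged into one kernel-verified Lean document; each statement's English description precedes it below -/
import Mathlib

section
/- Let G be a connected finite simple graph and T a spanning tree of G rooted at a vertex r such that every edge of G joins two vertices one of which is an ancestor of the other in T (the defining property of a depth-first search tree). Let F = E(G)\E(T) and let X ⊆ V(G). If C and C' are two distinct cycles in G − X that have at least two vertices in common, then there exist two distinct edges e, e' ∈ F, each active in X, that have a conflict. -/
open SimpleGraph

/-- `u` is an ancestor of `v` in the tree `T` rooted at `r`. -/
def Anc {V : Type*} (T : SimpleGraph V) (r u v : V) : Prop :=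
  ∀ p : T.Walk r v, p.IsPath → u ∈ p.support

/-- `x` lies on the span (tree path) from `t` to `b`. -/
def InSpan {V : Type*} (T : SimpleGraph V) (t b x : V) : Prop :=
  ∀ p : T.Walk t b, p.IsPath → x ∈ p.support

/-- Two non-tree edges, given by tops/bottoms `(t, b)` and `(t', b')`, have a conflict
    if the top of one belongs to the truncated span of the other. -/
def Conflict {V : Type*} (T : SimpleGraph V) (t b t' b' : V) : Prop :=
  (InSpan T t b t' ∧ t' ≠ b) ∨ (InSpan T t' b' t ∧ t ≠ b')

/-- The edge `e` is active in `X`: some cycle of `G − X` traverses `e`. -/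
def ActiveIn {V : Type*} (G : SimpleGraph V) (X : Set V) (e : Sym2 V) : Prop :=
  ∃ (u : ↥Xᶜ) (c : (G.induce Xᶜ).Walk u u), c.IsCycle ∧
    e ∈ c.edges.map (Sym2.map Subtype.val)

/-!
In a depth-first search tree every edge of `G` joins a vertex to one of its descendants, and
every cycle contains a non-tree edge, since `T` is acyclic. Let `(t, b)` be a back edge on a
cycle and `c` the child of `t` towards `b`. The cycle enters the subtree of `c` through
`(t, b)`, so it leaves it through another edge, whose upper end is an ancestor of `t`; if that
edge is a back edge, `t` lies in its truncated span. Otherwise it is the tree edge `t c`, and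
then the whole cycle stays in `{t} ∪ subtree(c)`. Applying this to two back edges of one cycle
shows that their tops coincide, which is again a conflict. So we may assume both cycles are
fundamental cycles `(t, b) + span`, `(t', b') + span'`; their edge sets differ, hence so do the
back edges, and two common vertices `x`, `y` lie on both spans. The tops `t`, `t'` are both
ancestors of `x`, and the lower one lies in the truncated span of the other edge.
-/

namespace SimpleGraph.Walk

variable {α : Type*} {H : SimpleGraph α}

theorem exists_crossing_edge {u v x y : α} (w : H.Walk u v) (S : Set α) (hx : x ∈ w.support)
    (hy : y ∈ w.support) (hxS : x ∉ S) (hyS : y ∈ S) :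
    ∃ P Q, s(P, Q) ∈ w.edges ∧ P ∉ S ∧ Q ∈ S := by
  classical
  by_cases huS : u ∈ S
  · obtain ⟨d, hd, hfst, hsnd⟩ := (w.takeUntil x hx).exists_boundary_dart S huS hxS
    refine ⟨d.snd, d.fst, ?_, hsnd, hfst⟩
    rw [Sym2.eq_swap]
    exact w.edges_takeUntil_subset_edges hx (List.mem_map_of_mem hd)
  · obtain ⟨d, hd, hfst, hsnd⟩ := (w.takeUntil y hy).exists_boundary_dart Sᶜ huS (by simpa)
    exact ⟨d.fst, d.snd, w.edges_takeUntil_subset_edges hy (List.mem_map_of_mem hd), hfst,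
      by simpa using hsnd⟩

theorem IsCycle.exists_isPath_of_isSubwalk {u a b : α} {c : H.Walk u u} (hc : c.IsCycle)
    (h : H.Adj a b) (hs : h.toWalk.IsSubwalk c) :
    ∃ p : H.Walk b a, p.IsPath ∧ s(a, b) ∉ p.edges ∧
      (∀ e, e ∈ c.edges ↔ e = s(a, b) ∨ e ∈ p.edges) ∧ ∀ x, x ∈ c.support ↔ x ∈ p.support := by
  obtain ⟨ru, rv, rfl⟩ := hs
  have hcons : (cons h (rv.append ru)).IsCycle := by
    rw [isCycle_def] at hc ⊢
    obtain ⟨htrail, -, hnodup⟩ := hc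
    refine ⟨?_, by simp, ?_⟩
    · rw [isTrail_def] at htrail ⊢
      simp only [edges_append, edges_cons, edges_nil, List.append_assoc, List.cons_append,
        List.nil_append] at htrail ⊢
      exact (List.perm_middle.trans (List.perm_append_comm.cons _)).nodup_iff.mp htrail
    · simp only [support_append, support_cons, support_nil, List.tail_cons] at hnodup ⊢
      rw [← cons_tail_support ru] at hnodup
      rw [← cons_tail_support rv] at hnodup ⊢
      simp only [List.cons_append, List.tail_cons, List.append_assoc] at hnodup ⊢
      exact (List.perm_middle.trans (List.perm_append_comm.cons _)).nodup_iff.mp hnodup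
  obtain ⟨hpath, hnotin⟩ := (cons_isCycle_iff _ h).mp hcons
  refine ⟨rv.append ru, hpath, hnotin, fun e => ?_, fun x => ?_⟩
  · simp only [edges_append, Adj.edges_toWalk, List.mem_append, List.mem_singleton]
    tauto
  · simp only [mem_support_append_iff, Adj.support_toWalk, List.mem_cons, List.not_mem_nil,
      or_false]
    have := ru.end_mem_support
    have := rv.start_mem_support
    grind

theorem IsCycle.exists_isPath_of_mem_edges {u a b : α} {c : H.Walk u u} (hc : c.IsCycle)
    (he : s(a, b) ∈ c.edges) :
    ∃ p : H.Walk b a, p.IsPath ∧ s(a, b) ∉ p.edges ∧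
      (∀ e, e ∈ c.edges ↔ e = s(a, b) ∨ e ∈ p.edges) ∧ ∀ x, x ∈ c.support ↔ x ∈ p.support := by
  rcases (isSubwalk_toWalk_iff_mem_edges (c.adj_of_mem_edges he)).mpr he with hs | hs
  · exact hc.exists_isPath_of_isSubwalk _ hs
  · obtain ⟨p, hp, hnotin, hedges, hsupp⟩ := hc.exists_isPath_of_isSubwalk _ hs
    refine ⟨p.reverse, hp.reverse, ?_, fun e => ?_, fun x => ?_⟩
    · simpa [Sym2.eq_swap] using hnotin
    · simp [hedges, Sym2.eq_swap]
    · simp [hsupp]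

theorem IsCycle.exists_crossing_edge_ne {u a b : α} {c : H.Walk u u} (hc : c.IsCycle)
    (S : Set α) (he : s(a, b) ∈ c.edges) (ha : a ∉ S) (hb : b ∈ S) :
    ∃ P Q, s(P, Q) ∈ c.edges ∧ s(P, Q) ≠ s(a, b) ∧ P ∉ S ∧ Q ∈ S := by
  obtain ⟨p, -, hnotin, hedges, -⟩ := hc.exists_isPath_of_mem_edges he
  obtain ⟨P, Q, hPQ, hP, hQ⟩ :=
    p.exists_crossing_edge S p.end_mem_support p.start_mem_support ha hb
  exact ⟨P, Q, (hedges _).mpr (.inr hPQ), fun h => hnotin (h ▸ hPQ), hP, hQ⟩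

theorem IsCycle.eq_or_eq_or_eq_of_mem_edges {u A B₁ B₂ B₃ : α} {c : H.Walk u u}
    (hc : c.IsCycle) (h₁ : s(A, B₁) ∈ c.edges) (h₂ : s(A, B₂) ∈ c.edges)
    (h₃ : s(A, B₃) ∈ c.edges) : B₁ = B₂ ∨ B₁ = B₃ ∨ B₂ = B₃ := by
  by_contra! hne
  have htwo := hc.ncard_neighborSet_toSubgraph_eq_two (c.fst_mem_support_of_mem_edges h₁)
  have hsub : {B₁, B₂, B₃} ⊆ c.toSubgraph.neighborSet A := by
    simp only [Set.insert_subset_iff, Set.singleton_subset_iff, Subgraph.mem_neighborSet,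
      ← Subgraph.mem_edgeSet, mem_edges_toSubgraph]
    exact ⟨h₁, h₂, h₃⟩
  have := Set.ncard_le_ncard hsub (Set.finite_of_ncard_pos (by omega))
  rw [Set.ncard_eq_three.mpr ⟨B₁, B₂, B₃, hne.1, hne.2.1, hne.2.2, rfl⟩] at this
  omega

end SimpleGraph.Walk

open Walk

section

variable {V : Type*} {G T : SimpleGraph V} {r : V}

noncomputable def treePath (hT : T.IsTree) (u v : V) : T.Walk u v :=
  (hT.existsUnique_path u v).exists.choose

theorem isPath_treePath (hT : T.IsTree) (u v : V) : (treePath hT u v).IsPath :=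
  (hT.existsUnique_path u v).exists.choose_spec

theorem eq_treePath (hT : T.IsTree) {u v : V} {p : T.Walk u v} (hp : p.IsPath) :
    p = treePath hT u v :=
  (hT.existsUnique_path u v).unique hp (isPath_treePath hT u v)

theorem treePath_eq_append (hT : T.IsTree) {a b x : V} (hx : x ∈ (treePath hT a b).support) :
    treePath hT a b = (treePath hT a x).append (treePath hT x b) := by
  classical
  have hp := isPath_treePath hT a b
  rw [← eq_treePath hT (hp.takeUntil hx), ← eq_treePath hT (hp.dropUntil hx), take_spec]

theorem length_treePath_eq_add (hT : T.IsTree) {a b x : V}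
    (hx : x ∈ (treePath hT a b).support) :
    (treePath hT a b).length = (treePath hT a x).length + (treePath hT x b).length := by
  rw [treePath_eq_append hT hx, length_append]

theorem inSpan_iff_mem_support (hT : T.IsTree) {a b x : V} :
    InSpan T a b x ↔ x ∈ (treePath hT a b).support :=
  ⟨fun h => h _ (isPath_treePath hT a b), fun h _ hp => eq_treePath hT hp ▸ h⟩

theorem anc_iff_mem_support (hT : T.IsTree) {u v : V} :
    Anc T r u v ↔ u ∈ (treePath hT r v).support :=
  inSpan_iff_mem_support hT

theorem inSpan_left (T : SimpleGraph V) (a b : V) : InSpan T a b a :=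
  fun p _ => p.start_mem_support

theorem inSpan_comm {a b x : V} : InSpan T a b x ↔ InSpan T b a x :=
  ⟨fun h p hp => by simpa using h p.reverse hp.reverse,
    fun h p hp => by simpa using h p.reverse hp.reverse⟩

theorem anc_refl (T : SimpleGraph V) (r v : V) : Anc T r v v :=
  fun p _ => p.end_mem_support

theorem Anc.trans (hT : T.IsTree) {u w v : V} (huw : Anc T r u w) (hwv : Anc T r w v) :
    Anc T r u v := by
  rw [anc_iff_mem_support hT] at *
  rw [treePath_eq_append hT hwv, mem_support_append_iff]
  exact .inl huw

theorem Anc.antisymm (hT : T.IsTree) {u v : V} (huv : Anc T r u v) (hvu : Anc T r v u) :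
    u = v := by
  rw [anc_iff_mem_support hT] at huv hvu
  have h₁ := length_treePath_eq_add hT huv
  have h₂ := length_treePath_eq_add hT hvu
  exact eq_of_length_eq_zero (p := treePath hT u v) (by omega)

theorem Anc.total (hT : T.IsTree) {u w v : V} (hu : Anc T r u v) (hw : Anc T r w v) :
    Anc T r u w ∨ Anc T r w u := by
  classical
  rw [anc_iff_mem_support hT] at hu hw ⊢
  rw [anc_iff_mem_support hT]
  have hp := isPath_treePath hT r v
  have hpu := (treePath hT r v).support_takeUntil_prefix_support hu
  have hpw := (treePath hT r v).support_takeUntil_prefix_support hw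
  rw [eq_treePath hT (hp.takeUntil hu)] at hpu
  rw [eq_treePath hT (hp.takeUntil hw)] at hpw
  exact (List.prefix_or_prefix_of_prefix hpu hpw).imp
    (fun h => h.subset (end_mem_support _)) (fun h => h.subset (end_mem_support _))

theorem inSpan_iff_anc (hT : T.IsTree) {t b x : V} (htb : Anc T r t b) :
    InSpan T t b x ↔ Anc T r t x ∧ Anc T r x b := by
  rw [inSpan_iff_mem_support hT]
  have hsplit := treePath_eq_append hT ((anc_iff_mem_support hT).mp htb)
  constructor
  · intro hx
    have hxb : Anc T r x b := by
      rw [anc_iff_mem_support hT, hsplit, mem_support_append_iff]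
      exact .inr hx
    refine ⟨?_, hxb⟩
    rcases htb.total hT hxb with htx | hxt
    · exact htx
    -- `x` would be both below `t` on the path `r ⟶ b` and above it
    have h₁ := length_treePath_eq_add hT hx
    have h₂ := length_treePath_eq_add hT ((anc_iff_mem_support hT).mp hxt)
    have h₃ := length_treePath_eq_add hT ((anc_iff_mem_support hT).mp hxb)
    have h₄ := length_treePath_eq_add hT ((anc_iff_mem_support hT).mp htb)
    rw [eq_of_length_eq_zero (p := treePath hT x t) (by omega)]
    exact anc_refl T r t
  · rintro ⟨htx, hxb⟩
    have hx := (anc_iff_mem_support hT).mp hxb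
    rw [hsplit, mem_support_append_iff] at hx
    rcases hx with hxt | hx
    · rw [Anc.antisymm hT ((anc_iff_mem_support hT).mpr hxt) htx]
      exact start_mem_support _
    · exact hx

theorem Anc.anc_of_adj (hT : T.IsTree) {x y z : V} (hxy : T.Adj x y) (hxy' : Anc T r x y)
    (hzy : Anc T r z y) (hne : z ≠ y) : Anc T r z x := by
  rw [anc_iff_mem_support hT] at hxy' hzy ⊢
  have hedge : hxy.toWalk = treePath hT x y := eq_treePath hT (by simp [hxy.ne])
  rw [treePath_eq_append hT hxy', mem_support_append_iff, ← hedge] at hzy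
  rcases hzy with hz | hz
  · exact hz
  · simp only [Adj.support_toWalk, List.mem_cons, List.not_mem_nil, or_false] at hz
    rcases hz with rfl | rfl
    · exact end_mem_support _
    · exact absurd rfl hne

theorem exists_child (hT : T.IsTree) {t b : V} (htb : Anc T r t b) (hne : t ≠ b) :
    ∃ c, T.Adj t c ∧ Anc T r t c ∧ Anc T r c b := by
  have hnil : ¬ (treePath hT t b).Nil := fun h => hne h.eq
  exact ⟨(treePath hT t b).snd, (treePath hT t b).adj_snd hnil, (inSpan_iff_anc hT htb).mp
    ((inSpan_iff_mem_support hT).mpr (getVert_mem_support _ _))⟩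

def EdgesComparable (G T : SimpleGraph V) (r : V) : Prop :=
  ∀ a b : V, G.Adj a b → Anc T r a b ∨ Anc T r b a

structure IsBackEdge (G T : SimpleGraph V) (r t b : V) : Prop where
  adj : G.Adj t b
  notMem_edgeSet : s(t, b) ∉ T.edgeSet
  anc : Anc T r t b

def HasConflictIn (G T : SimpleGraph V) (r : V) (E : Set (Sym2 V)) : Prop :=
  ∃ t b t' b', IsBackEdge G T r t b ∧ IsBackEdge G T r t' b' ∧ s(t, b) ∈ E ∧ s(t', b') ∈ E ∧
    s(t, b) ≠ s(t', b') ∧ Conflict T t b t' b'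

theorem HasConflictIn.mono {E E' : Set (Sym2 V)} (h : HasConflictIn G T r E) (hE : E ⊆ E') :
    HasConflictIn G T r E' := by
  obtain ⟨t, b, t', b', h₁, h₂, he, he', hne, hc⟩ := h
  exact ⟨t, b, t', b', h₁, h₂, hE he, hE he', hne, hc⟩

theorem IsBackEdge.eq_of_mk_eq (hT : T.IsTree) {t b t' b' : V} (h : IsBackEdge G T r t b)
    (h' : IsBackEdge G T r t' b') (heq : s(t, b) = s(t', b')) : t = t' ∧ b = b' := by
  rcases Sym2.eq_iff.mp heq with h₁ | ⟨rfl, rfl⟩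
  · exact h₁
  · exact absurd (h.anc.antisymm hT h'.anc) h.adj.ne

theorem exists_isBackEdge (hdfs : EdgesComparable G T r) {e : Sym2 V} (he : e ∈ G.edgeSet)
    (hnt : e ∉ T.edgeSet) : ∃ t b, e = s(t, b) ∧ IsBackEdge G T r t b := by
  obtain ⟨a, b⟩ := e
  rcases hdfs a b he with h | h
  · exact ⟨a, b, rfl, he, hnt, h⟩
  · exact ⟨b, a, Sym2.eq_swap, G.adj_symm he, by rwa [Sym2.eq_swap], h⟩

theorem exists_mem_edges_notMem_edgeSet (hT : T.IsAcyclic) {w : V} {D : G.Walk w w}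
    (hD : D.IsCycle) : ∃ e ∈ D.edges, e ∉ T.edgeSet := by
  by_contra! h
  exact hT _ (hD.transfer h)

theorem anc_inSpan_of_crossing (hT : T.IsTree) (hdfs : EdgesComparable G T r) {t c P Q : V}
    (htc : T.Adj t c) (htc' : Anc T r t c) (hPQ : G.Adj P Q) (hP : ¬ Anc T r c P)
    (hQ : Anc T r c Q) : Anc T r P Q ∧ InSpan T P Q t ∧ t ≠ Q := by
  have hPQ' : Anc T r P Q := (hdfs P Q hPQ).resolve_right fun h => hP (hQ.trans hT h)
  have hPc : Anc T r P c := (hPQ'.total hT hQ).resolve_right hP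
  have hPt : Anc T r P t :=
    Anc.anc_of_adj hT htc htc' hPc (by rintro rfl; exact hP (anc_refl T r P))
  refine ⟨hPQ', (inSpan_iff_anc hT hPQ').mpr ⟨hPt, htc'.trans hT hQ⟩, ?_⟩
  rintro rfl
  exact htc.ne (htc'.antisymm hT hQ)

theorem eq_of_adj_of_crossing (hT : T.IsTree) {t c P Q : V} (htc : T.Adj t c)
    (htc' : Anc T r t c) (hPQ : T.Adj P Q) (hPQ' : Anc T r P Q) (hP : ¬ Anc T r c P)
    (hQ : Anc T r c Q) : P = t ∧ Q = c := by
  obtain rfl : Q = c := by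
    by_contra hne
    exact hP (Anc.anc_of_adj hT hPQ hPQ' hQ (Ne.symm hne))
  exact ⟨(Anc.anc_of_adj hT htc htc' hPQ' hPQ.ne).antisymm hT
    (Anc.anc_of_adj hT hPQ hPQ' htc' htc.ne), rfl⟩

theorem hasConflictIn_or_support_subset (hT : T.IsTree) (hdfs : EdgesComparable G T r)
    {w t b c : V} {D : G.Walk w w} (hD : D.IsCycle) (hback : IsBackEdge G T r t b)
    (he : s(t, b) ∈ D.edges) (htc : T.Adj t c) (htc' : Anc T r t c) (hcb : Anc T r c b) :
    HasConflictIn G T r {e | e ∈ D.edges} ∨ ∀ z ∈ D.support, z = t ∨ Anc T r c z := by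
  have hct : ¬ Anc T r c t := fun h => htc.ne (htc'.antisymm hT h)
  by_cases hconf : ∃ P Q, s(P, Q) ∈ D.edges ∧ s(P, Q) ≠ s(t, b) ∧ s(P, Q) ∉ T.edgeSet ∧
      ¬ Anc T r c P ∧ Anc T r c Q
  · obtain ⟨P, Q, hPQ, hne, hnt, hP, hQ⟩ := hconf
    obtain ⟨hanc, hspan, htQ⟩ :=
      anc_inSpan_of_crossing hT hdfs htc htc' (D.adj_of_mem_edges hPQ) hP hQ
    exact .inl ⟨t, b, P, Q, hback, ⟨D.adj_of_mem_edges hPQ, hnt, hanc⟩, he, hPQ, hne.symm,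
      .inr ⟨hspan, htQ⟩⟩
  have htree : ∀ P Q, s(P, Q) ∈ D.edges → s(P, Q) ≠ s(t, b) → ¬ Anc T r c P →
      Anc T r c Q → P = t ∧ Q = c := fun P Q hPQ hne hP hQ =>
    eq_of_adj_of_crossing hT htc htc' (not_not.mp fun hnt => hconf ⟨P, Q, hPQ, hne, hnt, hP, hQ⟩)
      (anc_inSpan_of_crossing hT hdfs htc htc' (D.adj_of_mem_edges hPQ) hP hQ).1 hP hQ
  have htc_mem : s(t, c) ∈ D.edges := by
    obtain ⟨P, Q, hPQ, hne, hP, hQ⟩ := hD.exists_crossing_edge_ne {z | Anc T r c z} he hct hcb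
    obtain ⟨rfl, rfl⟩ := htree P Q hPQ hne hP hQ
    exact hPQ
  refine .inr fun z hz => ?_
  by_contra! hz'
  obtain ⟨P, Q, hPQ, hP, hQ⟩ := D.exists_crossing_edge {z | z = t ∨ Anc T r c z} hz
    (D.snd_mem_support_of_mem_edges he) (by simpa using hz') (.inr hcb)
  simp only [Set.mem_ofPred_eq, not_or] at hP hQ
  have hPb : P ≠ b := fun h => hP.2 (h ▸ hcb)
  rcases hQ with rfl | hQ
  · -- `tb` and `tc` are already the two edges of the cycle at `t`
    have hbc : b ≠ c := fun h => hback.notMem_edgeSet (h ▸ htc)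
    rw [Sym2.eq_swap] at hPQ
    rcases hD.eq_or_eq_or_eq_of_mem_edges he htc_mem hPQ with h | h | h
    · exact hbc h
    · exact hPb h.symm
    · exact hP.2 (h ▸ anc_refl T r c)
  · refine hP.1 (htree P Q hPQ (fun h => ?_) hP.2 hQ).1
    rcases Sym2.eq_iff.mp h with ⟨h, -⟩ | ⟨h, -⟩
    · exact hP.1 h
    · exact hPb h

theorem hasConflictIn_of_isBackEdge (hT : T.IsTree) (hdfs : EdgesComparable G T r)
    {w t b t' b' : V} {D : G.Walk w w} (hD : D.IsCycle) (h : IsBackEdge G T r t b)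
    (h' : IsBackEdge G T r t' b') (he : s(t, b) ∈ D.edges) (he' : s(t', b') ∈ D.edges)
    (hne : s(t, b) ≠ s(t', b')) : HasConflictIn G T r {e | e ∈ D.edges} := by
  by_cases htt : t = t'
  · subst htt
    exact ⟨t, b, t, b', h, h', he, he', hne, .inl ⟨inSpan_left T t b, h.adj.ne⟩⟩
  obtain ⟨c, htc, htc', hcb⟩ := exists_child hT h.anc h.adj.ne
  obtain ⟨c', htc₂, htc₂', hcb'⟩ := exists_child hT h'.anc h'.adj.ne
  rcases hasConflictIn_or_support_subset hT hdfs hD h he htc htc' hcb with hK | hsub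
  · exact hK
  rcases hasConflictIn_or_support_subset hT hdfs hD h' he' htc₂ htc₂' hcb' with hK | hsub'
  · exact hK
  exfalso
  rcases hsub t' (D.fst_mem_support_of_mem_edges he') with h₁ | h₁
  · exact htt h₁.symm
  rcases hsub' t (D.fst_mem_support_of_mem_edges he) with h₂ | h₂
  · exact htt h₂
  exact htt ((htc'.trans hT h₁).antisymm hT (htc₂'.trans hT h₂))

theorem hasConflictIn_or_unique_isBackEdge (hT : T.IsTree) (hdfs : EdgesComparable G T r)
    {w : V} {D : G.Walk w w} (hD : D.IsCycle) :
    HasConflictIn G T r {e | e ∈ D.edges} ∨ ∃ t b, IsBackEdge G T r t b ∧ s(t, b) ∈ D.edges ∧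
      ∀ e ∈ D.edges, e ≠ s(t, b) → e ∈ T.edgeSet := by
  obtain ⟨e, he, hnt⟩ := exists_mem_edges_notMem_edgeSet hT.isAcyclic hD
  obtain ⟨t, b, rfl, hback⟩ := exists_isBackEdge hdfs (D.edges_subset_edgeSet he) hnt
  by_cases hsec : ∃ e ∈ D.edges, e ≠ s(t, b) ∧ e ∉ T.edgeSet
  · obtain ⟨e', he', hne, hnt'⟩ := hsec
    obtain ⟨t', b', rfl, hback'⟩ := exists_isBackEdge hdfs (D.edges_subset_edgeSet he') hnt'
    exact .inl (hasConflictIn_of_isBackEdge hT hdfs hD hback hback' he he' hne.symm)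
  · exact .inr ⟨t, b, hback, he, fun e he hne => not_not.mp fun hnt => hsec ⟨e, he, hne, hnt⟩⟩

theorem inSpan_of_mem_support_and_mem_edges_iff (hT : T.IsTree) {w a b : V}
    {D : G.Walk w w} (hD : D.IsCycle) (he : s(a, b) ∈ D.edges)
    (htree : ∀ e ∈ D.edges, e ≠ s(a, b) → e ∈ T.edgeSet) :
    (∀ x ∈ D.support, InSpan T a b x) ∧
      ∀ e, e ∈ D.edges ↔ e = s(a, b) ∨ e ∈ (treePath hT b a).edges := by
  obtain ⟨p, hp, hnotin, hedges, hsupp⟩ := hD.exists_isPath_of_mem_edges he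
  have hpT : ∀ e ∈ p.edges, e ∈ T.edgeSet := fun e he' =>
    htree e ((hedges e).mpr (.inr he')) fun h => hnotin (h ▸ he')
  have hq := eq_treePath hT (hp.transfer hpT)
  refine ⟨fun x hx => inSpan_comm.mpr ((inSpan_iff_mem_support hT).mpr ?_),
    fun e => by rw [hedges, ← hq, edges_transfer]⟩
  rwa [← hq, support_transfer, ← hsupp]

theorem conflict_of_inSpan_of_inSpan (hT : T.IsTree) {t b t' b' x y : V} (htb : Anc T r t b)
    (htb' : Anc T r t' b') (hx : InSpan T t b x) (hx' : InSpan T t' b' x)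
    (hy : InSpan T t b y) (hy' : InSpan T t' b' y) (hxy : x ≠ y) : Conflict T t b t' b' := by
  rw [inSpan_iff_anc hT htb] at hx hy
  rw [inSpan_iff_anc hT htb'] at hx' hy'
  wlog hxy' : Anc T r x y generalizing x y
  · exact this hy hy' hx hx' hxy.symm ((hx.2.total hT hy.2).resolve_left hxy')
  have key : ∀ {s e s'}, Anc T r s e → Anc T r y e → Anc T r s s' → Anc T r s' x →
      InSpan T s e s' ∧ s' ≠ e := fun hse hye hss' hs'x =>
    ⟨(inSpan_iff_anc hT hse).mpr ⟨hss', hs'x.trans hT (hxy'.trans hT hye)⟩, by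
      rintro rfl
      exact hxy (hxy'.antisymm hT (hye.trans hT hs'x))⟩
  rcases hx.1.total hT hx'.1 with h | h
  · exact .inl (key htb hy.2 h hx'.1)
  · exact .inr (key htb' hy'.2 h hx.1)

theorem activeIn_of_mem_edges_map {X : Set V} {u : ↥Xᶜ} {C : (G.induce Xᶜ).Walk u u}
    (hC : C.IsCycle) {e : Sym2 V} (he : e ∈ (C.map (Embedding.induce Xᶜ).toHom).edges) :
    ActiveIn G X e :=
  ⟨u, C, hC, by rwa [edges_map] at he⟩

theorem map_mem_edges_map_induce_iff {X : Set V} {u v : ↥Xᶜ} {C : (G.induce Xᶜ).Walk u v}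
    {e : Sym2 ↥Xᶜ} :
    Sym2.map Subtype.val e ∈ (C.map (Embedding.induce Xᶜ).toHom).edges ↔ e ∈ C.edges := by
  rw [edges_map]
  exact List.mem_map_of_injective (Sym2.map.injective Subtype.val_injective)

theorem coe_mem_support_map_induce {X : Set V} {u v z : ↥Xᶜ} {C : (G.induce Xᶜ).Walk u v}
    (hz : z ∈ C.support) : (z : V) ∈ (C.map (Embedding.induce Xᶜ).toHom).support := by
  rw [Walk.support_map]
  exact List.mem_map_of_mem hz

end

theorem stmt4_general {V : Type*} (G T : SimpleGraph V)
    (hT : T.IsTree) (r : V)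
    (hdfs : ∀ a b : V, G.Adj a b → Anc T r a b ∨ Anc T r b a)
    (X : Set V) (u v : ↥Xᶜ)
    (C : (G.induce Xᶜ).Walk u u) (C' : (G.induce Xᶜ).Walk v v)
    (hC : C.IsCycle) (hC' : C'.IsCycle)
    (hdistinct : {e | e ∈ C.edges} ≠ {e | e ∈ C'.edges})
    (hcommon : ∃ x y : ↥Xᶜ, x ≠ y ∧ x ∈ C.support ∧ x ∈ C'.support ∧
      y ∈ C.support ∧ y ∈ C'.support) :
    ∃ t b t' b' : V, G.Adj t b ∧ G.Adj t' b' ∧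
      s(t, b) ∉ T.edgeSet ∧ s(t', b') ∉ T.edgeSet ∧
      Anc T r t b ∧ Anc T r t' b' ∧ s(t, b) ≠ s(t', b') ∧
      ActiveIn G X s(t, b) ∧ ActiveIn G X s(t', b') ∧ Conflict T t b t' b' := by
  suffices h : HasConflictIn G T r {e | ActiveIn G X e} by
    obtain ⟨t, b, t', b', ⟨h₁, h₂, h₃⟩, ⟨h₁', h₂', h₃'⟩, ha, ha', hne, hc⟩ := h
    exact ⟨t, b, t', b', h₁, h₁', h₂, h₂', h₃, h₃', hne, ha, ha', hc⟩
  have hD := hC.map (f := (Embedding.induce Xᶜ).toHom) Subtype.val_injective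
  have hD' := hC'.map (f := (Embedding.induce Xᶜ).toHom) Subtype.val_injective
  rcases hasConflictIn_or_unique_isBackEdge hT hdfs hD with hK | ⟨t, b, hback, he, htree⟩
  · exact hK.mono fun e => activeIn_of_mem_edges_map hC
  rcases hasConflictIn_or_unique_isBackEdge hT hdfs hD' with hK | ⟨t', b', hback', he', htree'⟩
  · exact hK.mono fun e => activeIn_of_mem_edges_map hC'
  obtain ⟨hspan, hedges⟩ := inSpan_of_mem_support_and_mem_edges_iff hT hD he htree
  obtain ⟨hspan', hedges'⟩ := inSpan_of_mem_support_and_mem_edges_iff hT hD' he' htree'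
  have hne : s(t, b) ≠ s(t', b') := by
    intro heq
    obtain ⟨rfl, rfl⟩ := hback.eq_of_mk_eq hT hback' heq
    exact hdistinct (Set.ext fun e => by
      simp only [Set.mem_ofPred_eq, ← map_mem_edges_map_induce_iff (C := C),
        ← map_mem_edges_map_induce_iff (C := C'), hedges, hedges'])
  obtain ⟨x, y, hxy, hxC, hxC', hyC, hyC'⟩ := hcommon
  exact ⟨t, b, t', b', hback, hback', activeIn_of_mem_edges_map hC he,
    activeIn_of_mem_edges_map hC' he', hne, conflict_of_inSpan_of_inSpan hT hback.anc hback'.anc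
      (hspan _ (coe_mem_support_map_induce hxC)) (hspan' _ (coe_mem_support_map_induce hxC'))
      (hspan _ (coe_mem_support_map_induce hyC)) (hspan' _ (coe_mem_support_map_induce hyC'))
      fun h => hxy (Subtype.ext h)⟩

/-- If two distinct cycles of `G − X` share at least two vertices, then there are two
    distinct non-tree edges, both active in `X`, that have a conflict. -/
theorem stmt4 {V : Type*} [Fintype V] (G T : SimpleGraph V) (hsub : T ≤ G)
    (hT : T.IsTree) (r : V)
    (hdfs : ∀ a b : V, G.Adj a b → Anc T r a b ∨ Anc T r b a)
    (X : Set V) (u v : ↥Xᶜ)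
    (C : (G.induce Xᶜ).Walk u u) (C' : (G.induce Xᶜ).Walk v v)
    (hC : C.IsCycle) (hC' : C'.IsCycle)
    (hdistinct : {e | e ∈ C.edges} ≠ {e | e ∈ C'.edges})
    (hcommon : ∃ x y : ↥Xᶜ, x ≠ y ∧ x ∈ C.support ∧ x ∈ C'.support ∧
      y ∈ C.support ∧ y ∈ C'.support) :
    ∃ t b t' b' : V, G.Adj t b ∧ G.Adj t' b' ∧
      s(t, b) ∉ T.edgeSet ∧ s(t', b') ∉ T.edgeSet ∧
      Anc T r t b ∧ Anc T r t' b' ∧ s(t, b) ≠ s(t', b') ∧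
      ActiveIn G X s(t, b) ∧ ActiveIn G X s(t', b') ∧ Conflict T t b t' b' :=
  stmt4_general G T hT r hdfs X u v C C' hC hC' hdistinct hcommon
end

section
/- Let U be a finite universe and 𝓕 ⊆ 2^U a finite family of nonempty subsets of U. Construct the simple graph G with vertex set U ∪ {v_F : F ∈ 𝓕} ∪ {x, y} (all new vertices distinct from U), and edge set {{u, v_F} : F ∈ 𝓕, u ∈ F} ∪ {{u, x} : u ∈ U} ∪ {{x, y}}. Then the minimum size of a hitting set of (U, 𝓕) equals the minimum size of a dominating set of G minus 1. Moreover, U ∪ {y} is a vertex cover of G. -/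
open SimpleGraph

/-- Vertices of the reduction graph: the universe `U`, a vertex `v_F` for each
    `F ∈ 𝓕`, and two extra vertices `x = inr (inr 0)` and `y = inr (inr 1)`. -/
abbrev HSVertex {α : Type*} (𝓕 : Finset (Finset α)) : Type _ :=
  α ⊕ ({F : Finset α // F ∈ 𝓕} ⊕ Fin 2)

/-- Adjacency generator for the hitting-set reduction: edges `{u, v_F}` for `u ∈ F`,
    edges `{u, x}` for all `u ∈ U`, and the edge `{x, y}`. -/
def hsRel {α : Type*} (𝓕 : Finset (Finset α)) : HSVertex 𝓕 → HSVertex 𝓕 → Prop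
  | Sum.inl u, Sum.inr (Sum.inl F) => u ∈ F.val
  | Sum.inl _, Sum.inr (Sum.inr j) => j = 0
  | Sum.inr (Sum.inr i), Sum.inr (Sum.inr j) => i = 0 ∧ j = 1
  | _, _ => False

/-- The reduction graph from `Hitting Set` to `Dominating Set`. -/
def hsGraph {α : Type*} (𝓕 : Finset (Finset α)) : SimpleGraph (HSVertex 𝓕) :=
  fromRel (hsRel 𝓕)

/-- Minimum size of a dominating set of `G`. -/
noncomputable def minDomSize {V : Type*} (G : SimpleGraph V) : ℕ :=
  sInf {n | ∃ S : Set V, (∀ v : V, v ∈ S ∨ ∃ u ∈ S, G.Adj u v) ∧ S.ncard = n}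

/-- Minimum size of a hitting set of `(U, 𝓕)`. -/
noncomputable def minHitSize {α : Type*} (𝓕 : Finset (Finset α)) : ℕ :=
  sInf {n | ∃ U' : Finset α, (∀ F ∈ 𝓕, ∃ u ∈ U', u ∈ F) ∧ U'.card = n}

lemma hs_adj {α : Type*} (𝓕 : Finset (Finset α)) (a b : HSVertex 𝓕) :
    (hsGraph 𝓕).Adj a b ↔ a ≠ b ∧ (hsRel 𝓕 a b ∨ hsRel 𝓕 b a) :=
  fromRel_adj _ _ _

lemma hs_lb {α : Type*} [Fintype α] (𝓕 : Finset (Finset α))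
    (h𝓕 : ∀ F ∈ 𝓕, F.Nonempty)
    (S : Set (HSVertex 𝓕)) (hS : ∀ v, v ∈ S ∨ ∃ u ∈ S, (hsGraph 𝓕).Adj u v) :
    minHitSize 𝓕 + 1 ≤ S.ncard := by
  classical
  -- S contains x or y (to dominate y)
  have hxy : (Sum.inr (Sum.inr 0) : HSVertex 𝓕) ∈ S ∨
      (Sum.inr (Sum.inr 1) : HSVertex 𝓕) ∈ S := by
    rcases hS (Sum.inr (Sum.inr 1)) with h | ⟨u, hu, hadj⟩
    · exact Or.inr h
    · left
      rw [hs_adj] at hadj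
      obtain ⟨-, h | h⟩ := hadj
      · rcases u with u | F | i
        · simp [hsRel] at h
        · simp [hsRel] at h
        · obtain ⟨hi, -⟩ := h
          rwa [hi] at hu
      · rcases u with u | F | i <;> simp [hsRel] at h
  obtain ⟨z, hz, hzy⟩ : ∃ z, z ∈ S ∧ (z = Sum.inr (Sum.inr 0) ∨ z = Sum.inr (Sum.inr 1)) := by
    rcases hxy with h | h
    · exact ⟨_, h, Or.inl rfl⟩
    · exact ⟨_, h, Or.inr rfl⟩
  have hSfin : S.Finite := Set.toFinite _
  -- every F is hit by S via inl or via v_F itself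
  have key : ∀ (F : Finset α) (hF : F ∈ 𝓕),
      (∃ u ∈ F, Sum.inl u ∈ S) ∨ (Sum.inr (Sum.inl ⟨F, hF⟩) : HSVertex 𝓕) ∈ S := by
    intro F hF
    rcases hS (Sum.inr (Sum.inl ⟨F, hF⟩)) with h | ⟨u, hu, hadj⟩
    · exact Or.inr h
    · left
      rw [hs_adj] at hadj
      obtain ⟨-, h | h⟩ := hadj
      · rcases u with u | F' | i
        · exact ⟨u, h, hu⟩
        · simp [hsRel] at h
        · simp [hsRel] at h
      · simp [hsRel] at h
  by_cases hF0 : 𝓕 = ∅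
  · -- empty family: minHitSize = 0, and S is nonempty
    have h0 : minHitSize 𝓕 = 0 :=
      Nat.eq_zero_of_le_zero (Nat.sInf_le ⟨∅, by simp [hF0], rfl⟩)
    have : 0 < S.ncard := (Set.ncard_pos hSfin).mpr ⟨z, hz⟩
    omega
  · obtain ⟨F0, hF0'⟩ := Finset.nonempty_iff_ne_empty.mpr hF0
    have : Nonempty α := ⟨(h𝓕 F0 hF0').choose⟩
    -- the extraction map
    set g : HSVertex 𝓕 → α := fun v =>
      match v with
      | Sum.inl u => u
      | Sum.inr (Sum.inl F) => (h𝓕 F.1 F.2).choose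
      | Sum.inr (Sum.inr _) => Classical.arbitrary α with hg
    set T : Finset (HSVertex 𝓕) :=
      hSfin.toFinset.filter (fun v => ∀ i : Fin 2, v ≠ Sum.inr (Sum.inr i)) with hT
    have hTcard : T.card + 1 ≤ S.ncard := by
      have hzT : z ∉ T := by
        rcases hzy with h | h <;> simp [hT, h]
      have : T ⊆ hSfin.toFinset.erase z :=
        fun v hv => Finset.mem_erase.mpr ⟨fun he => hzT (he ▸ hv), (Finset.mem_filter.mp hv).1⟩
      have h2 := Finset.card_le_card this
      have h3 : z ∈ hSfin.toFinset := by simpa using hz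
      rw [Finset.card_erase_of_mem h3] at h2
      have h4 : 1 ≤ hSfin.toFinset.card := Finset.card_pos.mpr ⟨z, h3⟩
      rw [Set.ncard_eq_toFinset_card S hSfin]
      omega
    have hhit : minHitSize 𝓕 ≤ (T.image g).card := by
      apply Nat.sInf_le
      refine ⟨T.image g, ?_, rfl⟩
      intro F hF
      rcases key F hF with ⟨u, huF, huS⟩ | h
      · exact ⟨u, Finset.mem_image.mpr ⟨Sum.inl u,
          Finset.mem_filter.mpr ⟨hSfin.mem_toFinset.mpr huS, by simp⟩, rfl⟩, huF⟩
      · exact ⟨g (Sum.inr (Sum.inl ⟨F, hF⟩)), Finset.mem_image.mpr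
          ⟨Sum.inr (Sum.inl ⟨F, hF⟩),
            Finset.mem_filter.mpr ⟨hSfin.mem_toFinset.mpr h, by simp⟩, rfl⟩,
          (h𝓕 F hF).choose_spec⟩
    have := Finset.card_image_le (s := T) (f := g)
    omega

/-- from a hitting set, a dominating set of size +1 -/
lemma hs_ub {α : Type*} [Fintype α] (𝓕 : Finset (Finset α))
    (U' : Finset α) (hU : ∀ F ∈ 𝓕, ∃ u ∈ U', u ∈ F) :
    minDomSize (hsGraph 𝓕) ≤ U'.card + 1 := by
  classical
  set x : HSVertex 𝓕 := Sum.inr (Sum.inr 0) with hx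
  apply Nat.sInf_le
  refine ⟨(Sum.inl '' (↑U' : Set α)) ∪ {x}, ?_, ?_⟩
  · intro v
    rcases v with u | F | i
    · right
      refine ⟨x, Or.inr rfl, ?_⟩
      rw [hs_adj]
      exact ⟨by simp [hx], Or.inr (by simp [hsRel, hx])⟩
    · obtain ⟨u, hu1, hu2⟩ := hU F.1 F.2
      right
      refine ⟨Sum.inl u, Or.inl ⟨u, by simpa using hu1, rfl⟩, ?_⟩
      rw [hs_adj]
      exact ⟨by simp, Or.inl (by simpa [hsRel] using hu2)⟩
    · fin_cases i
      · exact Or.inl (Or.inr rfl)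
      · right
        refine ⟨x, Or.inr rfl, ?_⟩
        rw [hs_adj]
        refine ⟨by simp [hx], Or.inl ?_⟩
        simp [hsRel, hx]
  · rw [Set.ncard_union_eq (by simp [hx]) (by simp [Set.Finite.image, Set.toFinite]) (Set.toFinite _)]
    rw [Set.ncard_image_of_injective _ Sum.inl_injective, Set.ncard_coe_finset,
      Set.ncard_singleton]

/-- The minimum size of a hitting set of `(U, 𝓕)` equals the minimum size of a
    dominating set of the reduction graph minus 1; moreover `U ∪ {y}` is a vertex
    cover of the reduction graph. -/
theorem stmt6 {α : Type*} [Fintype α] (𝓕 : Finset (Finset α))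
    (h𝓕 : ∀ F ∈ 𝓕, F.Nonempty) :
    minDomSize (hsGraph 𝓕) = minHitSize 𝓕 + 1 ∧
    (∀ a b : HSVertex 𝓕, (hsGraph 𝓕).Adj a b →
      a ∈ Set.range Sum.inl ∪ {Sum.inr (Sum.inr 1)} ∨
      b ∈ Set.range Sum.inl ∪ {Sum.inr (Sum.inr 1)}) := by
  constructor
  · apply le_antisymm
    · have hne : {n | ∃ U' : Finset α, (∀ F ∈ 𝓕, ∃ u ∈ U', u ∈ F) ∧ U'.card = n}.Nonempty :=
        ⟨Finset.univ.card, Finset.univ, fun F hF =>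
          ⟨(h𝓕 F hF).choose, Finset.mem_univ _, (h𝓕 F hF).choose_spec⟩, rfl⟩
      obtain ⟨U', hU', hcard⟩ := Nat.sInf_mem hne
      rw [minHitSize, ← hcard]
      exact hs_ub 𝓕 U' hU'
    · rw [minDomSize]
      refine le_csInf ⟨(Set.univ : Set (HSVertex 𝓕)).ncard, Set.univ,
        fun v => Or.inl trivial, rfl⟩ ?_
      rintro n ⟨S, hS, rfl⟩
      exact hs_lb 𝓕 h𝓕 S hS
  · intro a b hab
    rw [hs_adj] at hab
    obtain ⟨hne, h⟩ := hab
    rcases a with u | F | i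
    · exact Or.inl (Or.inl ⟨u, rfl⟩)
    · rcases b with u' | F' | j
      · exact Or.inr (Or.inl ⟨u', rfl⟩)
      · simp [hsRel] at h
      · simp [hsRel] at h
    · rcases b with u' | F' | j
      · exact Or.inr (Or.inl ⟨u', rfl⟩)
      · simp [hsRel] at h
      · simp only [hsRel] at h
        rcases h with ⟨_, hj⟩ | ⟨_, hi⟩
        · exact Or.inr (Or.inr (by simp [hj]))
        · exact Or.inl (Or.inr (by simp [hi]))
end

section
/- Let G be a finite simple graph, W ⊆ V(G), and let v ∈ W be a vertex of degree 1 in G. Then the minimum size of a {G, W}-dominating set equals the minimum size of a {G − v, W\{v}}-dominating set. -/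
/-!
Removing a dominator `v` from a dominating set and adding the unique neighbour `u` of `v`
instead still dominates everything outside `W`: the only vertices `v` dominates are `v`
itself, which lies in `W`, and `u`, which now dominates itself. So some minimum
`{G, W}`-dominating set avoids `v` and restricts to a `{G − v, W \ {v}}`-dominating set;
conversely a dominating set of `G − v` dominates `G` outside `W`, since `v ∈ W`.
-/

open SimpleGraph

/-- `S` is a `{G, W}`-dominating set: `S` dominates all vertices outside `W`. -/
def WDomSet {V : Type*} (G : SimpleGraph V) (W S : Set V) : Prop :=
  ∀ b : V, b ∉ W → ∃ a ∈ S, a = b ∨ G.Adj a b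

/-- Minimum size of a `{G, W}`-dominating set. -/
noncomputable def minWDom {V : Type*} (G : SimpleGraph V) (W : Set V) : ℕ :=
  sInf {n | ∃ S : Set V, WDomSet G W S ∧ S.ncard = n}

namespace WDomSet

variable {V : Type*} {G : SimpleGraph V} {W S : Set V}

theorem preimage_val {s : Set V} (hS : WDomSet G W S) (hSs : S ⊆ s) :
    WDomSet (G.induce s) (Subtype.val ⁻¹' W) (Subtype.val ⁻¹' S) := by
  intro b hb
  obtain ⟨a, haS, hab⟩ := hS b hb
  exact ⟨⟨a, hSs haS⟩, haS, hab.imp_left Subtype.ext⟩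

theorem image_val {s : Set V} {T : Set s} (hT : WDomSet (G.induce s) (Subtype.val ⁻¹' W) T)
    (hsW : sᶜ ⊆ W) : WDomSet G W (Subtype.val '' T) := by
  intro b hb
  obtain ⟨a, haT, hab⟩ := hT ⟨b, not_not.mp fun hbs => hb (hsW hbs)⟩ hb
  exact ⟨a, Set.mem_image_of_mem _ haT, hab.imp_left (congrArg Subtype.val)⟩

theorem insert_diff_singleton_of_pendant {u v : V} (hS : WDomSet G W S) (hvW : v ∈ W)
    (huniq : ∀ w, G.Adj v w → w = u) : WDomSet G W (insert u (S \ {v})) := by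
  intro b hb
  obtain ⟨a, haS, hab⟩ := hS b hb
  by_cases hav : a = v
  · subst hav
    have hbu : b = u := hab.resolve_left (fun h => hb (h ▸ hvW)) |> huniq b
    exact ⟨u, Set.mem_insert u _, Or.inl hbu.symm⟩
  · exact ⟨a, Set.mem_insert_of_mem u ⟨haS, hav⟩, hab⟩

theorem exists_notMem_ncard_le_of_pendant {u v : V} (hS : WDomSet G W S) (hSfin : S.Finite)
    (hvW : v ∈ W) (hvu : G.Adj v u) (huniq : ∀ w, G.Adj v w → w = u) :
    ∃ S', WDomSet G W S' ∧ v ∉ S' ∧ S'.ncard ≤ S.ncard := by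
  by_cases hvS : v ∈ S
  · refine ⟨insert u (S \ {v}), hS.insert_diff_singleton_of_pendant hvW huniq, ?_, ?_⟩
    · rintro (h | ⟨-, h⟩)
      exacts [hvu.ne h, h rfl]
    · calc (insert u (S \ {v})).ncard ≤ (S \ {v}).ncard + 1 := Set.ncard_insert_le _ _
        _ = S.ncard := Set.ncard_sdiff_singleton_add_one hvS hSfin
  · exact ⟨S, hS, hvS, le_rfl⟩

end WDomSet

section minWDom

variable {V : Type*} (G : SimpleGraph V) (W : Set V)

theorem minWDom_le {S : Set V} (hS : WDomSet G W S) : minWDom G W ≤ S.ncard :=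
  Nat.sInf_le ⟨S, hS, rfl⟩

theorem exists_wDomSet_ncard_eq_minWDom : ∃ S, WDomSet G W S ∧ S.ncard = minWDom G W :=
  Nat.sInf_mem (s := {n | ∃ S : Set V, WDomSet G W S ∧ S.ncard = n})
    ⟨_, Set.univ, fun b _ => ⟨b, trivial, Or.inl rfl⟩, rfl⟩

end minWDom

theorem stmt9_general {V : Type*} [Fintype V] (G : SimpleGraph V)
    [DecidableRel G.Adj] (W : Set V) (v : V) (hvW : v ∈ W) (hdeg : G.degree v = 1) :
    minWDom G W = minWDom (G.induce {x | x ≠ v}) {x : {x : V // x ≠ v} | ↑x ∈ W} := by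
  obtain ⟨u, hvu, huniq⟩ := degree_eq_one_iff_existsUnique_adj.mp hdeg
  apply le_antisymm
  · obtain ⟨T, hT, hTcard⟩ := exists_wDomSet_ncard_eq_minWDom (G.induce {x | x ≠ v})
      {x : {x : V // x ≠ v} | ↑x ∈ W}
    rw [← hTcard, ← Set.ncard_image_of_injective _ Subtype.val_injective]
    exact minWDom_le G W (hT.image_val fun x hx => (not_not.mp hx).symm ▸ hvW)
  · obtain ⟨S, hS, hScard⟩ := exists_wDomSet_ncard_eq_minWDom G W
    obtain ⟨S', hS', hvS', hle⟩ :=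
      hS.exists_notMem_ncard_le_of_pendant S.toFinite hvW hvu huniq
    have hS'v : S' ⊆ {x | x ≠ v} := fun x hx hxv => hvS' (hxv ▸ hx)
    calc minWDom (G.induce {x | x ≠ v}) {x : {x : V // x ≠ v} | ↑x ∈ W}
        ≤ (Subtype.val ⁻¹' S' : Set {x : V // x ≠ v}).ncard :=
          minWDom_le _ _ (hS'.preimage_val hS'v)
      _ = S'.ncard := Set.ncard_preimage_of_injective_subset_range Subtype.val_injective
          (by simpa using hS'v)
      _ ≤ minWDom G W := hScard ▸ hle

/-- If `v ∈ W` has degree 1 in `G`, then the minimum size of a `{G, W}`-dominating set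
    equals the minimum size of a `{G − v, W \ {v}}`-dominating set. -/
theorem stmt9 {V : Type*} [Fintype V] [DecidableEq V] (G : SimpleGraph V)
    [DecidableRel G.Adj] (W : Set V) (v : V) (hvW : v ∈ W) (hdeg : G.degree v = 1) :
    minWDom G W = minWDom (G.induce {x | x ≠ v}) {x : {x : V // x ≠ v} | ↑x ∈ W} :=
  stmt9_general G W v hvW hdeg
end

section
/- Let G be a finite simple graph, W ⊆ V(G), and let u, u₁, u₂, u₃, v be five distinct vertices with u₁, u₂, u₃ ∉ W such that N_G(u₁) = {u, u₂}, N_G(u₂) = {u₁, u₃}, and N_G(u₃) = {u₂, v}. Let G' be the graph obtained from G by deleting u₁, u₂, u₃ and adding the edge {u, v}. Then the minimum size of a {G, W}-dominating set equals the minimum size of a {G', W}-dominating set plus 1. -/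
open SimpleGraph

/-- Long `W`-free path reduction: if `u — u₁ — u₂ — u₃ — v` is an induced path whose
    internal vertices `u₁, u₂, u₃` (not in `W`) have no other neighbors, and `G'` is
    obtained by deleting `u₁, u₂, u₃` and adding the edge `{u, v}`, then the minimum
    size of a `{G, W}`-dominating set equals that of a `{G', W}`-dominating set
    plus 1. -/
theorem stmt11 {V : Type*} [Fintype V] (G : SimpleGraph V) (W : Set V)
    (u u₁ u₂ u₃ v : V) (hnd : [u, u₁, u₂, u₃, v].Nodup)
    (h1W : u₁ ∉ W) (h2W : u₂ ∉ W) (h3W : u₃ ∉ W)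
    (hn1 : G.neighborSet u₁ = {u, u₂})
    (hn2 : G.neighborSet u₂ = {u₁, u₃})
    (hn3 : G.neighborSet u₃ = {u₂, v}) :
    minWDom G W =
      minWDom (fromRel (fun a b : {x : V // x ∉ ({u₁, u₂, u₃} : Set V)} =>
          G.Adj ↑a ↑b ∨ (↑a = u ∧ ↑b = v)))
        {x : {x : V // x ∉ ({u₁, u₂, u₃} : Set V)} | ↑x ∈ W} + 1 := by
  classical
  have hnd' : u ≠ u₁ ∧ u ≠ u₂ ∧ u ≠ u₃ ∧ u ≠ v ∧ u₁ ≠ u₂ ∧ u₁ ≠ u₃ ∧ u₁ ≠ v ∧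
      u₂ ≠ u₃ ∧ u₂ ≠ v ∧ u₃ ≠ v := by
    simp only [List.nodup_cons, List.mem_cons, List.not_mem_nil, or_false,
      List.nodup_nil, and_true, not_or, List.mem_singleton] at hnd
    tauto
  obtain ⟨hu1, hu2, hu3, huv, h12, h13, h1v, h23, h2v, h3v⟩ := hnd'
  have hu : u ∉ ({u₁, u₂, u₃} : Set V) := by simp [hu1, hu2, hu3]
  have hv : v ∉ ({u₁, u₂, u₃} : Set V) := by
    simp [Ne.symm h1v, Ne.symm h2v, Ne.symm h3v]
  have a1 : ∀ x, G.Adj u₁ x ↔ x = u ∨ x = u₂ := by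
    intro x; have := Set.ext_iff.mp hn1 x; simpa using this
  have a2 : ∀ x, G.Adj u₂ x ↔ x = u₁ ∨ x = u₃ := by
    intro x; have := Set.ext_iff.mp hn2 x; simpa using this
  have a3 : ∀ x, G.Adj u₃ x ↔ x = u₂ ∨ x = v := by
    intro x; have := Set.ext_iff.mp hn3 x; simpa using this
  set G' : SimpleGraph {x : V // x ∉ ({u₁, u₂, u₃} : Set V)} :=
    fromRel (fun a b => G.Adj ↑a ↑b ∨ (↑a = u ∧ ↑b = v)) with hG'
  set W' : Set {x : V // x ∉ ({u₁, u₂, u₃} : Set V)} := {x | ↑x ∈ W} with hW'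
  simp only [minWDom]
  have hne : ({n | ∃ S : Set V, WDomSet G W S ∧ S.ncard = n}).Nonempty :=
    ⟨Set.univ.ncard, Set.univ, fun b _ => ⟨b, trivial, Or.inl rfl⟩, rfl⟩
  have hne' : ({n | ∃ S, WDomSet G' W' S ∧ S.ncard = n}).Nonempty :=
    ⟨Set.univ.ncard, Set.univ, fun b _ => ⟨b, trivial, Or.inl rfl⟩, rfl⟩
  have upper : sInf {n | ∃ S : Set V, WDomSet G W S ∧ S.ncard = n} ≤
      sInf {n | ∃ S, WDomSet G' W' S ∧ S.ncard = n} + 1 := by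
    obtain ⟨S', hdom', hcard'⟩ := Nat.sInf_mem hne'
    have hcount : ∀ (w : V), (Subtype.val '' S' ∪ {w}).ncard ≤ S'.ncard + 1 := by
      intro w
      refine le_trans (Set.ncard_union_le _ _) ?_
      rw [Set.ncard_image_of_injective _ Subtype.val_injective, Set.ncard_singleton]
    have hle : ∀ T : Set V, WDomSet G W T →
        sInf {n | ∃ S : Set V, WDomSet G W S ∧ S.ncard = n} ≤ T.ncard :=
      fun T h => Nat.sInf_le ⟨T, h, rfl⟩
    have hgen : ∀ (b : V), b ∉ W → b ≠ u → b ≠ u₁ → b ≠ u₂ → b ≠ u₃ → b ≠ v →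
        ∃ a ∈ Subtype.val '' S', a = b ∨ G.Adj a b := by
      intro b hb hbu hb1 hb2 hb3 hbv
      have hbP : b ∉ ({u₁, u₂, u₃} : Set V) := by simp [hb1, hb2, hb3]
      obtain ⟨a', ha'S, ha'⟩ := hdom' ⟨b, hbP⟩ hb
      refine ⟨↑a', ⟨a', ha'S, rfl⟩, ?_⟩
      rcases ha' with h | h
      · exact Or.inl (congrArg Subtype.val h)
      · rw [hG', fromRel_adj] at h
        obtain ⟨-, h⟩ := h
        rcases h with (h | ⟨h1, h2⟩) | (h | ⟨h1, h2⟩)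
        · exact Or.inr h
        · exact absurd h2 hbv
        · exact Or.inr h.symm
        · exact absurd h1 hbu
    by_cases hus : (⟨u, hu⟩ : {x : V // x ∉ ({u₁, u₂, u₃} : Set V)}) ∈ S'
    · have hdomG : WDomSet G W (Subtype.val '' S' ∪ {u₃}) := by
        intro b hb
        rcases eq_or_ne b u₁ with heq | hb1
        · rw [heq] at hb ⊢; exact ⟨u, Or.inl ⟨⟨u, hu⟩, hus, rfl⟩, Or.inr ((a1 u).mpr (Or.inl rfl)).symm⟩
        rcases eq_or_ne b u₂ with heq | hb2
        · rw [heq] at hb ⊢; exact ⟨u₃, Set.mem_union_right _ rfl, Or.inr ((a2 u₃).mpr (Or.inr rfl)).symm⟩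
        rcases eq_or_ne b u₃ with heq | hb3
        · rw [heq] at hb ⊢; exact ⟨u₃, Set.mem_union_right _ rfl, Or.inl rfl⟩
        rcases eq_or_ne b v with heq | hbv
        · rw [heq] at hb ⊢; exact ⟨u₃, Set.mem_union_right _ rfl, Or.inr ((a3 v).mpr (Or.inr rfl))⟩
        rcases eq_or_ne b u with heq | hbu
        · rw [heq] at hb ⊢; exact ⟨u, Or.inl ⟨⟨u, hu⟩, hus, rfl⟩, Or.inl rfl⟩
        obtain ⟨a, haS, ha⟩ := hgen b hb hbu hb1 hb2 hb3 hbv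
        exact ⟨a, Or.inl haS, ha⟩
      exact le_trans (hle _ hdomG) (by rw [← hcard']; exact hcount u₃)
    · by_cases hvs : (⟨v, hv⟩ : {x : V // x ∉ ({u₁, u₂, u₃} : Set V)}) ∈ S'
      · have hdomG : WDomSet G W (Subtype.val '' S' ∪ {u₁}) := by
          intro b hb
          rcases eq_or_ne b u with heq | hbu
          · rw [heq] at hb ⊢; exact ⟨u₁, Set.mem_union_right _ rfl, Or.inr ((a1 u).mpr (Or.inl rfl))⟩
          rcases eq_or_ne b u₁ with heq | hb1
          · rw [heq] at hb ⊢; exact ⟨u₁, Set.mem_union_right _ rfl, Or.inl rfl⟩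
          rcases eq_or_ne b u₂ with heq | hb2
          · rw [heq] at hb ⊢; exact ⟨u₁, Set.mem_union_right _ rfl, Or.inr ((a1 u₂).mpr (Or.inr rfl))⟩
          rcases eq_or_ne b u₃ with heq | hb3
          · rw [heq] at hb ⊢; exact ⟨v, Or.inl ⟨⟨v, hv⟩, hvs, rfl⟩, Or.inr ((a3 v).mpr (Or.inr rfl)).symm⟩
          rcases eq_or_ne b v with heq | hbv
          · rw [heq] at hb ⊢; exact ⟨v, Or.inl ⟨⟨v, hv⟩, hvs, rfl⟩, Or.inl rfl⟩
          obtain ⟨a, haS, ha⟩ := hgen b hb hbu hb1 hb2 hb3 hbv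
          exact ⟨a, Or.inl haS, ha⟩
        exact le_trans (hle _ hdomG) (by rw [← hcard']; exact hcount u₁)
      · have hdomG : WDomSet G W (Subtype.val '' S' ∪ {u₂}) := by
          intro b hb
          rcases eq_or_ne b u₁ with heq | hb1
          · rw [heq] at hb ⊢; exact ⟨u₂, Set.mem_union_right _ rfl, Or.inr ((a2 u₁).mpr (Or.inl rfl))⟩
          rcases eq_or_ne b u₂ with heq | hb2
          · rw [heq] at hb ⊢; exact ⟨u₂, Set.mem_union_right _ rfl, Or.inl rfl⟩
          rcases eq_or_ne b u₃ with heq | hb3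
          · rw [heq] at hb ⊢; exact ⟨u₂, Set.mem_union_right _ rfl, Or.inr ((a2 u₃).mpr (Or.inr rfl))⟩
          rcases eq_or_ne b u with heq | hbu
          · rw [heq] at hb ⊢; obtain ⟨a', ha'S, ha'⟩ := hdom' ⟨u, hu⟩ hb
            rcases ha' with h | h
            · exact absurd (h ▸ ha'S) hus
            · rw [hG', fromRel_adj] at h
              obtain ⟨-, h⟩ := h
              rcases h with (h | ⟨h1, h2⟩) | (h | ⟨h1, h2⟩)
              · exact ⟨↑a', Or.inl ⟨a', ha'S, rfl⟩, Or.inr h⟩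
              · exact absurd h2 huv
              · exact ⟨↑a', Or.inl ⟨a', ha'S, rfl⟩, Or.inr h.symm⟩
              · have : a' = ⟨v, hv⟩ := Subtype.ext h2
                exact absurd (this ▸ ha'S) hvs
          rcases eq_or_ne b v with heq | hbv
          · rw [heq] at hb ⊢; obtain ⟨a', ha'S, ha'⟩ := hdom' ⟨v, hv⟩ hb
            rcases ha' with h | h
            · exact absurd (h ▸ ha'S) hvs
            · rw [hG', fromRel_adj] at h
              obtain ⟨-, h⟩ := h
              rcases h with (h | ⟨h1, h2⟩) | (h | ⟨h1, h2⟩)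
              · exact ⟨↑a', Or.inl ⟨a', ha'S, rfl⟩, Or.inr h⟩
              · have : a' = ⟨u, hu⟩ := Subtype.ext h1
                exact absurd (this ▸ ha'S) hus
              · exact ⟨↑a', Or.inl ⟨a', ha'S, rfl⟩, Or.inr h.symm⟩
              · exact absurd h1 (Ne.symm huv)
          obtain ⟨a, haS, ha⟩ := hgen b hb hbu hb1 hb2 hb3 hbv
          exact ⟨a, Or.inl haS, ha⟩
        exact le_trans (hle _ hdomG) (by rw [← hcard']; exact hcount u₂)
  have lower : sInf {n | ∃ S, WDomSet G' W' S ∧ S.ncard = n} + 1 ≤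
      sInf {n | ∃ S : Set V, WDomSet G W S ∧ S.ncard = n} := by
    obtain ⟨S, hdom, hcard⟩ := Nat.sInf_mem hne
    set base : Set {x : V // x ∉ ({u₁, u₂, u₃} : Set V)} := {x | ↑x ∈ S} with hbase
    have himg : Subtype.val '' base = {y | y ∈ S ∧ y ∉ ({u₁, u₂, u₃} : Set V)} := by
      ext y
      constructor
      · rintro ⟨⟨x, hx⟩, hxS, rfl⟩; exact ⟨hxS, hx⟩
      · rintro ⟨hyS, hyP⟩; exact ⟨⟨y, hyP⟩, hyS, rfl⟩
    have hP : u₁ ∈ S ∨ u₂ ∈ S ∨ u₃ ∈ S := by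
      obtain ⟨a0, ha0S, ha0⟩ := hdom u₂ h2W
      rcases ha0 with rfl | h
      · exact Or.inr (Or.inl ha0S)
      · rcases (a2 a0).mp h.symm with rfl | rfl
        · exact Or.inl ha0S
        · exact Or.inr (Or.inr ha0S)
    have hBle : ∀ T, WDomSet G' W' T →
        sInf {n | ∃ S, WDomSet G' W' S ∧ S.ncard = n} ≤ T.ncard :=
      fun T h => Nat.sInf_le ⟨T, h, rfl⟩
    have hgenL : ∀ (b' : {x : V // x ∉ ({u₁, u₂, u₃} : Set V)}) (a : V), a ∈ S →
        a ∉ ({u₁, u₂, u₃} : Set V) → (a = ↑b' ∨ G.Adj a ↑b') →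
        ∃ c ∈ base, c = b' ∨ G'.Adj c b' := by
      intro b' a haS haP h
      refine ⟨⟨a, haP⟩, haS, ?_⟩
      rcases h with h | h
      · exact Or.inl (Subtype.ext h)
      · refine Or.inr ?_
        rw [hG', fromRel_adj]
        exact ⟨fun e => G.ne_of_adj h (congrArg Subtype.val e), Or.inl (Or.inl h)⟩
    have hbne : ∀ b' : {x : V // x ∉ ({u₁, u₂, u₃} : Set V)},
        (↑b' : V) ≠ u₁ ∧ (↑b' : V) ≠ u₂ ∧ (↑b' : V) ≠ u₃ := by
      intro b'
      have := b'.2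
      simp only [Set.mem_insert_iff, Set.mem_singleton_iff, not_or] at this
      exact this
    have count1 : ∀ (p : V), p ∈ S → p ∈ ({u₁, u₂, u₃} : Set V) →
        base.ncard + 1 ≤ S.ncard := by
      intro p hpS hpP
      have h1 : base.ncard = (Subtype.val '' base).ncard :=
        (Set.ncard_image_of_injective _ Subtype.val_injective).symm
      have h2 : Subtype.val '' base ⊆ S \ {p} := by
        rw [himg]; rintro y ⟨hyS, hyP⟩; exact ⟨hyS, fun e => hyP (e ▸ hpP)⟩
      have h3 : (S \ {p}).ncard + 1 = S.ncard :=
        Set.ncard_diff_singleton_add_one hpS S.toFinite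
      have h4 := Set.ncard_le_ncard h2 (Set.toFinite _)
      omega
    have count2 : ∀ (p q : V), p ∈ S → q ∈ S → p ≠ q → p ∈ ({u₁, u₂, u₃} : Set V) →
        q ∈ ({u₁, u₂, u₃} : Set V) →
        (base ∪ {(⟨u, hu⟩ : {x : V // x ∉ ({u₁, u₂, u₃} : Set V)})}).ncard + 1 ≤ S.ncard := by
      intro p q hpS hqS hpq hpP hqP
      have hsub : ({p, q} : Set V) ⊆ S := by rintro y (rfl | rfl); exacts [hpS, hqS]
      have h0 : (base ∪ {(⟨u, hu⟩ : {x : V // x ∉ ({u₁, u₂, u₃} : Set V)})}).ncard ≤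
          base.ncard + 1 :=
        le_trans (Set.ncard_union_le _ _) (by rw [Set.ncard_singleton])
      have h1 : base.ncard = (Subtype.val '' base).ncard :=
        (Set.ncard_image_of_injective _ Subtype.val_injective).symm
      have h2 : Subtype.val '' base ⊆ S \ {p, q} := by
        rw [himg]; rintro y ⟨hyS, hyP⟩
        refine ⟨hyS, ?_⟩
        rintro (rfl | rfl)
        · exact hyP hpP
        · exact hyP hqP
      have h3 : (S \ ({p, q} : Set V)).ncard = S.ncard - 2 := by
        rw [Set.ncard_diff hsub (Set.toFinite _), Set.ncard_pair hpq]
      have h4 : 2 ≤ S.ncard := by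
        have := Set.ncard_le_ncard hsub S.toFinite
        rwa [Set.ncard_pair hpq] at this
      have h5 := Set.ncard_le_ncard h2 (Set.toFinite _)
      omega
    have domA : (u₁ ∈ S ∧ u₂ ∈ S) ∨ (u₁ ∈ S ∧ u₃ ∈ S) ∨ (u₂ ∈ S ∧ u₃ ∈ S) →
        WDomSet G' W' (base ∪ {(⟨u, hu⟩ : {x : V // x ∉ ({u₁, u₂, u₃} : Set V)})}) := by
      intro _ b' hb'
      obtain ⟨a, haS, ha⟩ := hdom ↑b' hb'
      by_cases haP : a ∈ ({u₁, u₂, u₃} : Set V)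
      · have hbuv : (↑b' : V) = u ∨ (↑b' : V) = v := by
          rcases ha with rfl | h
          · exact absurd haP b'.2
          simp only [Set.mem_insert_iff, Set.mem_singleton_iff] at haP
          rcases haP with rfl | rfl | rfl
          · rcases (a1 ↑b').mp h with h' | h'
            · exact Or.inl h'
            · exact absurd h' (hbne b').2.1
          · rcases (a2 ↑b').mp h with h' | h'
            · exact absurd h' (hbne b').1
            · exact absurd h' (hbne b').2.2
          · rcases (a3 ↑b').mp h with h' | h'
            · exact absurd h' (hbne b').2.1
            · exact Or.inr h'
        rcases hbuv with hbu | hbv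
        · exact ⟨⟨u, hu⟩, Set.mem_union_right _ rfl, Or.inl (Subtype.ext hbu.symm)⟩
        · refine ⟨⟨u, hu⟩, Set.mem_union_right _ rfl, Or.inr ?_⟩
          rw [hG', fromRel_adj]
          exact ⟨fun e => huv ((congrArg Subtype.val e).trans hbv),
            Or.inl (Or.inr ⟨rfl, hbv⟩)⟩
      · obtain ⟨c, hc, h⟩ := hgenL b' a haS haP ha
        exact ⟨c, Or.inl hc, h⟩
    by_cases h1S : u₁ ∈ S
    · by_cases h2S : u₂ ∈ S
      · have hd := domA (Or.inl ⟨h1S, h2S⟩)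
        have hc := count2 u₁ u₂ h1S h2S h12 (by simp) (by simp)
        have := hBle _ hd
        omega
      · by_cases h3S : u₃ ∈ S
        · have hd := domA (Or.inr (Or.inl ⟨h1S, h3S⟩))
          have hc := count2 u₁ u₃ h1S h3S h13 (by simp) (by simp)
          have := hBle _ hd
          omega
        · -- only u₁ ∈ S; v must be in S
          have hvS : v ∈ S := by
            obtain ⟨a, haS, ha⟩ := hdom u₃ h3W
            rcases ha with rfl | h
            · exact absurd haS h3S
            · rcases (a3 a).mp h.symm with rfl | rfl
              · exact absurd haS h2S
              · exact haS
          have hd : WDomSet G' W' base := by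
            intro b' hb'
            obtain ⟨a, haS, ha⟩ := hdom ↑b' hb'
            by_cases haP : a ∈ ({u₁, u₂, u₃} : Set V)
            · simp only [Set.mem_insert_iff, Set.mem_singleton_iff] at haP
              rcases haP with rfl | rfl | rfl
              · have hbu : (↑b' : V) = u := by
                  rcases ha with h | h
                  · exact absurd h.symm (hbne b').1
                  · rcases (a1 ↑b').mp h with h' | h'
                    · exact h'
                    · exact absurd h' (hbne b').2.1
                refine ⟨⟨v, hv⟩, hvS, Or.inr ?_⟩
                rw [hG', fromRel_adj]
                exact ⟨fun e => huv (((congrArg Subtype.val e).trans hbu).symm),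
                  Or.inr (Or.inr ⟨hbu, rfl⟩)⟩
              · exact absurd haS h2S
              · exact absurd haS h3S
            · exact hgenL b' a haS haP ha
          have hc := count1 u₁ h1S (by simp)
          have := hBle _ hd
          omega
    · by_cases h2S : u₂ ∈ S
      · by_cases h3S : u₃ ∈ S
        · have hd := domA (Or.inr (Or.inr ⟨h2S, h3S⟩))
          have hc := count2 u₂ u₃ h2S h3S h23 (by simp) (by simp)
          have := hBle _ hd
          omega
        · -- only u₂ ∈ S
          have hd : WDomSet G' W' base := by
            intro b' hb'
            obtain ⟨a, haS, ha⟩ := hdom ↑b' hb'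
            by_cases haP : a ∈ ({u₁, u₂, u₃} : Set V)
            · simp only [Set.mem_insert_iff, Set.mem_singleton_iff] at haP
              rcases haP with rfl | rfl | rfl
              · exact absurd haS h1S
              · rcases ha with h | h
                · exact absurd h.symm (hbne b').2.1
                · rcases (a2 ↑b').mp h with h' | h'
                  · exact absurd h' (hbne b').1
                  · exact absurd h' (hbne b').2.2
              · exact absurd haS h3S
            · exact hgenL b' a haS haP ha
          have hc := count1 u₂ h2S (by simp)
          have := hBle _ hd
          omega
      · by_cases h3S : u₃ ∈ S
        · -- only u₃ ∈ S; u must be in S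
          have huS : u ∈ S := by
            obtain ⟨a, haS, ha⟩ := hdom u₁ h1W
            rcases ha with rfl | h
            · exact absurd haS h1S
            · rcases (a1 a).mp h.symm with rfl | rfl
              · exact haS
              · exact absurd haS h2S
          have hd : WDomSet G' W' base := by
            intro b' hb'
            obtain ⟨a, haS, ha⟩ := hdom ↑b' hb'
            by_cases haP : a ∈ ({u₁, u₂, u₃} : Set V)
            · simp only [Set.mem_insert_iff, Set.mem_singleton_iff] at haP
              rcases haP with rfl | rfl | rfl
              · exact absurd haS h1S
              · exact absurd haS h2S
              · have hbv : (↑b' : V) = v := by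
                  rcases ha with h | h
                  · exact absurd h.symm (hbne b').2.2
                  · rcases (a3 ↑b').mp h with h' | h'
                    · exact absurd h' (hbne b').2.1
                    · exact h'
                refine ⟨⟨u, hu⟩, huS, Or.inr ?_⟩
                rw [hG', fromRel_adj]
                exact ⟨fun e => huv ((congrArg Subtype.val e).trans hbv),
                  Or.inl (Or.inr ⟨rfl, hbv⟩)⟩
            · exact hgenL b' a haS haP ha
          have hc := count1 u₃ h3S (by simp)
          have := hBle _ hd
          omega
        · exact absurd hP (by simp [h1S, h2S, h3S])
  omega
end

section
/- Let G be a finite simple graph, M ⊆ V(G), and L ⊆ M. Let G_L be the graph with vertex set (V(G)\M) ∪ {x}, where x is a new vertex, and edge set E(G − M) ∪ {{x, w} : w ∈ N_G(L)\M}. Then: (1) if A ⊆ V(G) satisfies A ∩ M = L and A dominates V(G)\M in G, then (A\M) ∪ {x} is a dominating set of G_L; and (2) if A' ⊆ V(G_L) is a dominating set of G_L, then the set A defined as A' if x ∉ A', and as (A'\{x}) ∪ L if x ∈ A', dominates V(G)\M in G. -/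
open SimpleGraph

/-- `A` dominates `B` in `G`: every `b ∈ B` has a vertex of `A` in its closed
    neighborhood. -/
def Dominates {V : Type*} (G : SimpleGraph V) (A B : Set V) : Prop :=
  ∀ b ∈ B, ∃ a ∈ A, a = b ∨ G.Adj a b

/-- The graph `G_L`: vertex set `(V(G) \ M) ∪ {x}` (with `x = none` a new vertex),
    keeping the edges of `G − M` and joining `x` to all vertices of `N_G(L) \ M`. -/
def modGraphL {V : Type*} (G : SimpleGraph V) (M L : Set V) :
    SimpleGraph (Option {w : V // w ∉ M}) :=
  fromRel (fun a b =>
    match a, b with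
    | some a, some b => G.Adj ↑a ↑b
    | none, some b => (↑b : V) ∈ {w : V | w ∉ L ∧ ∃ l ∈ L, G.Adj l w}
    | _, _ => False)

/-- (1) If `A ∩ M = L` and `A` dominates `V(G) \ M` in `G`, then `(A \ M) ∪ {x}` is a
    dominating set of `G_L`; (2) if `A'` is a dominating set of `G_L`, then the set
    `A'` (with `x` replaced by `L` if `x ∈ A'`) dominates `V(G) \ M` in `G`. -/
theorem stmt12 {V : Type*} [Fintype V] (G : SimpleGraph V) (M L : Set V) (hLM : L ⊆ M) :
    (∀ A : Set V, A ∩ M = L → Dominates G A Mᶜ →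
      Dominates (modGraphL G M L)
        {o : Option {w : V // w ∉ M} | o = none ∨ ∃ a : {w : V // w ∉ M},
          o = some a ∧ ↑a ∈ A}
        Set.univ) ∧
    (∀ A' : Set (Option {w : V // w ∉ M}), Dominates (modGraphL G M L) A' Set.univ →
      Dominates G {w : V | (∃ h : w ∉ M, some ⟨w, h⟩ ∈ A') ∨ (none ∈ A' ∧ w ∈ L)}
        Mᶜ) := by
  constructor
  · intro A hAM hdom o _
    match o with
    | none => exact ⟨none, Or.inl rfl, Or.inl rfl⟩
    | some b =>
      obtain ⟨a, haA, hab⟩ := hdom b b.2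
      rcases hab with rfl | hadj
      · exact ⟨some b, Or.inr ⟨b, rfl, haA⟩, Or.inl rfl⟩
      by_cases haM : a ∈ M
      · have haL : a ∈ L := hAM ▸ ⟨haA, haM⟩
        refine ⟨none, Or.inl rfl, Or.inr ?_⟩
        refine ⟨by simp, Or.inl ?_⟩
        exact ⟨fun hbL => b.2 (hLM hbL), a, haL, hadj⟩
      · refine ⟨some ⟨a, haM⟩, Or.inr ⟨⟨a, haM⟩, rfl, haA⟩, Or.inr ?_⟩
        exact ⟨fun he => hadj.ne (congrArg Subtype.val (Option.some.inj he)), Or.inl hadj⟩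
  · intro A' hdom w hwM
    obtain ⟨a', ha'A, h⟩ := hdom (some ⟨w, hwM⟩) trivial
    match a' with
    | some v =>
      rcases h with h | h
      · cases Option.some.inj h
        exact ⟨w, Or.inl ⟨hwM, ha'A⟩, Or.inl rfl⟩
      · obtain ⟨hne, hrel⟩ := h
        have hvw : (v : V) ≠ w := fun he => hne (by
          cases v; simp_all)
        have hadj : G.Adj ↑v w := by
          rcases hrel with h | h
          · exact h
          · exact h.symm
        exact ⟨v, Or.inl ⟨v.2, ha'A⟩, Or.inr hadj⟩
    | none =>
      rcases h with h | h
      · exact absurd h (by simp)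
      · obtain ⟨_, hrel⟩ := h
        rcases hrel with h | h
        · obtain ⟨_, l, hlL, hadj⟩ := h
          exact ⟨l, Or.inr ⟨ha'A, hlL⟩, Or.inr hadj⟩
        · exact absurd h (by simp [modGraphL])
end
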